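/- If W_1(t),...,W_N(t) solve the gradient flow of L^N with balanced initial values (W_{j+1}^T(0) W_{j+1}(0) = W_j(0) W_j^T(0) for all j), then W_{j+1}^T(t) W_{j+1}(t) = W_j(t) W_j^T(t) for all j and all t ≥ 0. -/

import Mathlib

open Matrix

/-- Cast a matrix along equalities of its (Fin) dimensions. -/
def mcast {a b c e : ℕ} (h1 : a = b) (h2 : c = e) (M : Matrix (Fin a) (Fin c) ℝ) :
    Matrix (Fin b) (Fin e) ℝ :=
  M.submatrix (Fin.cast h1.symm) (Fin.cast h2.symm)

/-- The product W_{a+k} ⋯ W_{a+1} of `k` consecutive layer matrices starting at layer `a`. -/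
def segProd (d : ℕ → ℕ) (W : ∀ i : ℕ, Matrix (Fin (d (i + 1))) (Fin (d i)) ℝ) (a : ℕ) :
    (k : ℕ) → Matrix (Fin (d (a + k))) (Fin (d a)) ℝ
  | 0 => (1 : Matrix (Fin (d a)) (Fin (d a)) ℝ)
  | (k + 1) => W (a + k) * segProd d W a k

/-- The full product W = W_N ⋯ W_1 of all `N` layers. -/
def netProd (N : ℕ) (d : ℕ → ℕ) (W : ∀ i : ℕ, Matrix (Fin (d (i + 1))) (Fin (d i)) ℝ) :
    Matrix (Fin (d N)) (Fin (d 0)) ℝ :=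
  mcast (congrArg d (Nat.zero_add N)) rfl (segProd d W 0 N)

/-- L^N(W_1,…,W_N) = (1/2) ‖Y - W_N⋯W_1 X‖_F². -/
noncomputable def LN (N : ℕ) (d : ℕ → ℕ) (m : ℕ)
    (X : Matrix (Fin (d 0)) (Fin m) ℝ) (Y : Matrix (Fin (d N)) (Fin m) ℝ)
    (W : ∀ i : ℕ, Matrix (Fin (d (i + 1))) (Fin (d i)) ℝ) : ℝ :=
  (1 / 2) * Matrix.trace ((Y - netProd N d W * X) * (Y - netProd N d W * X)ᵀ)

/-- The claimed gradient ∇_{W_{j+1}} L^N = W_{j+2}ᵀ⋯W_Nᵀ (W X Xᵀ - Y Xᵀ) W_1ᵀ⋯W_jᵀ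
(0-based index `j`). -/
noncomputable def gradLN (N : ℕ) (d : ℕ → ℕ) (m : ℕ)
    (X : Matrix (Fin (d 0)) (Fin m) ℝ) (Y : Matrix (Fin (d N)) (Fin m) ℝ)
    (W : ∀ i : ℕ, Matrix (Fin (d (i + 1))) (Fin (d i)) ℝ) (j : ℕ) (hj : j < N) :
    Matrix (Fin (d (j + 1))) (Fin (d j)) ℝ :=
  (mcast (congrArg d (by omega : (j + 1) + (N - (j + 1)) = N)) rfl
      (segProd d W (j + 1) (N - (j + 1))))ᵀ *
    (netProd N d W * X * Xᵀ - Y * Xᵀ) *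
    (mcast (congrArg d (Nat.zero_add j)) rfl (segProd d W 0 j))ᵀ

/-!
Differentiating along the flow, `d/dt (W_{j+1}ᵀ W_{j+1} - W_j W_jᵀ)` equals
`-(G_{j+1}ᵀ W_{j+1} + W_{j+1}ᵀ G_{j+1}) + (G_j W_jᵀ + W_j G_jᵀ)`, where `G_i` is the gradient in
`W_i`. Writing `G_{j+1} = Pᵀ E (W_j S)ᵀ` and `G_j = (P W_{j+1})ᵀ E Sᵀ` with `P`, `S` the products of
the layers above `j + 1` and below `j`, one reads off `W_{j+1}ᵀ G_{j+1} = G_j W_jᵀ`; together with its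
transpose this makes the derivative vanish, so the difference keeps its initial value `0`.
-/

section Layers

lemma mcast_mul {a b f g c e : ℕ} (h1 : a = b) (h3 : f = g) (h2 : c = e)
    (A : Matrix (Fin a) (Fin f) ℝ) (B : Matrix (Fin f) (Fin c) ℝ) :
    mcast h1 h2 (A * B) = mcast h1 h3 A * mcast h3 h2 B := by
  subst h1 h2 h3; rfl

lemma mcast_mcast {a b c e f g : ℕ} (h1 : a = b) (h2 : b = c) (h3 : e = f) (h4 : f = g)
    (M : Matrix (Fin a) (Fin e) ℝ) :
    mcast h2 h4 (mcast h1 h3 M) = mcast (h1.trans h2) (h3.trans h4) M :=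
  rfl

variable (d : ℕ → ℕ) (W : ∀ i : ℕ, Matrix (Fin (d (i + 1))) (Fin (d i)) ℝ)

lemma mcast_layer {j k : ℕ} (h : j = k) (h1 : d (j + 1) = d (k + 1)) (h2 : d j = d k) :
    mcast h1 h2 (W j) = W k := by
  subst h; rfl

lemma mcast_segProd_congr {a k k' n : ℕ} (hk : k = k') (h : d (a + k) = n)
    (h' : d (a + k') = n) :
    mcast h rfl (segProd d W a k) = mcast h' rfl (segProd d W a k') := by
  subst hk; rfl

lemma segProd_succ_eq_mul_layer (a : ℕ) :
    ∀ (k : ℕ) (h : d (a + 1 + k) = d (a + (k + 1))),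
      segProd d W a (k + 1) = mcast h rfl (segProd d W (a + 1) k) * W a
  | 0, _ => by
      change W a * 1 = 1 * W a
      rw [Matrix.mul_one, Matrix.one_mul]
  | k + 1, h => by
      have h' : d (a + 1 + k) = d (a + (k + 1)) := congrArg d (by omega)
      change W (a + (k + 1)) * segProd d W a (k + 1)
          = mcast h rfl (W (a + 1 + k) * segProd d W (a + 1) k) * W a
      rw [mcast_mul h h' rfl, mcast_layer d W (by omega : a + 1 + k = a + (k + 1)),
        segProd_succ_eq_mul_layer a k h', Matrix.mul_assoc]

lemma mcast_segProd_zero_succ (j : ℕ) :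
    mcast (congrArg d (Nat.zero_add (j + 1))) rfl (segProd d W 0 (j + 1))
      = W j * mcast (congrArg d (Nat.zero_add j)) rfl (segProd d W 0 j) := by
  change mcast _ rfl (W (0 + j) * segProd d W 0 j) = _
  rw [mcast_mul _ (congrArg d (Nat.zero_add j)) rfl, mcast_layer d W (Nat.zero_add j)]

lemma mcast_segProd_top {N j : ℕ} (hj : j + 1 < N) :
    mcast (congrArg d (by omega : j + 1 + (N - (j + 1)) = N)) rfl
        (segProd d W (j + 1) (N - (j + 1)))
      = mcast (congrArg d (by omega : j + 1 + 1 + (N - (j + 1 + 1)) = N)) rfl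
          (segProd d W (j + 1 + 1) (N - (j + 1 + 1))) * W (j + 1) := by
  rw [mcast_segProd_congr d W (by omega : N - (j + 1) = N - (j + 1 + 1) + 1) _
      (congrArg d (by omega)),
    segProd_succ_eq_mul_layer d W (j + 1) _ (congrArg d (by omega)),
    mcast_mul _ rfl rfl, mcast_mcast]
  rfl

end Layers

lemma transpose_mul_gradLN_succ (N : ℕ) (d : ℕ → ℕ) (m : ℕ)
    (X : Matrix (Fin (d 0)) (Fin m) ℝ) (Y : Matrix (Fin (d N)) (Fin m) ℝ)
    (W : ∀ i : ℕ, Matrix (Fin (d (i + 1))) (Fin (d i)) ℝ) (j : ℕ) (hj : j + 1 < N) :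
    (W (j + 1))ᵀ * gradLN N d m X Y W (j + 1) hj
      = gradLN N d m X Y W j (by omega) * (W j)ᵀ := by
  unfold gradLN
  rw [mcast_segProd_zero_succ d W j, mcast_segProd_top d W hj]
  simp only [transpose_mul, Matrix.mul_assoc]

section Flow

variable {p q r : Type*} [Fintype q] [Fintype r]

lemma hasDerivAt_transpose_mul_self_apply (A : ℝ → Matrix q p ℝ) (A' : Matrix q p ℝ) {t : ℝ}
    (hA : ∀ i k, HasDerivAt (fun s => A s i k) (A' i k) t) (a b : p) :
    HasDerivAt (fun s => ((A s)ᵀ * A s) a b) ((A'ᵀ * A t + (A t)ᵀ * A') a b) t := by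
  simp only [mul_apply, transpose_apply, Matrix.add_apply, ← Finset.sum_add_distrib]
  exact HasDerivAt.fun_sum fun k _ => (hA k a).fun_mul (hA k b)

lemma hasDerivAt_mul_transpose_self_apply (B : ℝ → Matrix p r ℝ) (B' : Matrix p r ℝ) {t : ℝ}
    (hB : ∀ i k, HasDerivAt (fun s => B s i k) (B' i k) t) (a b : p) :
    HasDerivAt (fun s => (B s * (B s)ᵀ) a b) ((B' * (B t)ᵀ + B t * B'ᵀ) a b) t := by
  simpa only [transpose_transpose] using
    hasDerivAt_transpose_mul_self_apply (fun s => (B s)ᵀ) B'ᵀ (fun i k => hB k i) a b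

theorem transpose_mul_self_sub_mul_transpose_self_eq
    (A : ℝ → Matrix q p ℝ) (B : ℝ → Matrix p r ℝ) (GA : ℝ → Matrix q p ℝ)
    (GB : ℝ → Matrix p r ℝ)
    (hA : ∀ t i k, HasDerivAt (fun s => A s i k) (-GA t i k) t)
    (hB : ∀ t i k, HasDerivAt (fun s => B s i k) (-GB t i k) t)
    (hG : ∀ t, (A t)ᵀ * GA t = GB t * (B t)ᵀ) (t : ℝ) :
    (A t)ᵀ * A t - B t * (B t)ᵀ = (A 0)ᵀ * A 0 - B 0 * (B 0)ᵀ := by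
  ext a b
  have hderiv : ∀ s, HasDerivAt (fun u => ((A u)ᵀ * A u - B u * (B u)ᵀ) a b) 0 s := by
    intro s
    have hGt : (GA s)ᵀ * A s = B s * (GB s)ᵀ := by
      simpa only [transpose_mul, transpose_transpose] using congrArg transpose (hG s)
    have hzero : ((-GA s)ᵀ * A s + (A s)ᵀ * -GA s - ((-GB s) * (B s)ᵀ + B s * (-GB s)ᵀ)) a b
        = 0 := by
      simp only [transpose_neg, Matrix.neg_mul, Matrix.mul_neg, hG s, hGt,
        Matrix.sub_apply, Matrix.add_apply]
      ring
    rw [← hzero]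
    exact (hasDerivAt_transpose_mul_self_apply A (-GA s) (hA s) a b).sub
      (hasDerivAt_mul_transpose_self_apply B (-GB s) (hB s) a b)
  exact is_const_of_deriv_eq_zero (fun s => (hderiv s).differentiableAt)
    (fun s => (hderiv s).deriv) t 0

end Flow

theorem stmt3_general (N : ℕ) (d : ℕ → ℕ) (m : ℕ)
    (X : Matrix (Fin (d 0)) (Fin m) ℝ) (Y : Matrix (Fin (d N)) (Fin m) ℝ)
    (W : ℝ → ∀ i : ℕ, Matrix (Fin (d (i + 1))) (Fin (d i)) ℝ)
    (hflow : ∀ (j : ℕ) (hj : j < N) (t : ℝ) (a : Fin (d (j + 1))) (b : Fin (d j)),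
      HasDerivAt (fun s : ℝ => W s j a b) (-(gradLN N d m X Y (W t) j hj a b)) t)
    (hbal0 : ∀ j, j + 1 < N → (W 0 (j + 1))ᵀ * W 0 (j + 1) = W 0 j * (W 0 j)ᵀ) :
    ∀ t : ℝ, 0 ≤ t → ∀ j, j + 1 < N →
      (W t (j + 1))ᵀ * W t (j + 1) = W t j * (W t j)ᵀ := by
  intro t _ j hj
  have hconserved := transpose_mul_self_sub_mul_transpose_self_eq
    (fun s => W s (j + 1)) (fun s => W s j)
    (fun s => gradLN N d m X Y (W s) (j + 1) hj) (fun s => gradLN N d m X Y (W s) j (by omega))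
    (hflow (j + 1) hj) (hflow j (by omega))
    (fun s => transpose_mul_gradLN_succ N d m X Y (W s) j hj) t
  rw [hbal0 j hj, sub_self] at hconserved
  exact sub_eq_zero.mp hconserved

/-- If the initial values of the gradient flow of L^N are balanced, then they stay balanced
for all t ≥ 0. -/
theorem stmt3 (N : ℕ) (hN : 2 ≤ N) (d : ℕ → ℕ) (m : ℕ)
    (X : Matrix (Fin (d 0)) (Fin m) ℝ) (Y : Matrix (Fin (d N)) (Fin m) ℝ)
    (W : ℝ → ∀ i : ℕ, Matrix (Fin (d (i + 1))) (Fin (d i)) ℝ)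
    (hflow : ∀ (j : ℕ) (hj : j < N) (t : ℝ) (a : Fin (d (j + 1))) (b : Fin (d j)),
      HasDerivAt (fun s : ℝ => W s j a b) (-(gradLN N d m X Y (W t) j hj a b)) t)
    (hbal0 : ∀ j, j + 1 < N → (W 0 (j + 1))ᵀ * W 0 (j + 1) = W 0 j * (W 0 j)ᵀ) :
    ∀ t : ℝ, 0 ≤ t → ∀ j, j + 1 < N →
      (W t (j + 1))ᵀ * W t (j + 1) = W t j * (W t j)ᵀ :=
  stmt3_general N d m X Y W hflow hbal0
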